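/- For every k ∈ {1,…,n} and all 1 ≤ i < i′ ≤ n, one has f_k(v_{i,η_k} + r_{i,η_k}·(1,1)) ≤ f_k(v_{i′,η_k} + r_{i′,η_k}·(1,1)). -/

import Mathlib

open Finset

/-- `Λ_{2,n}`: pairs `α ∈ ℕ²` with `1 ≤ α₁ + α₂ ≤ n`. -/
def Lam2 (n : ℕ) : Finset (ℕ × ℕ) :=
  ((range (n+1)) ×ˢ (range (n+1))).filter (fun α => 1 ≤ α.1 + α.2 ∧ α.1 + α.2 ≤ n)

/-- `v̄ ∈ ℂ^{Λ_{2,n}}`, with `α`-coordinate `C(v₁,α₁)·C(v₂,α₂)`. -/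
noncomputable def vbar (n : ℕ) (v : ℕ × ℕ) : (Lam2 n) → ℂ :=
  fun α => ((v.1.choose α.1.1 * v.2.choose α.1.2 : ℕ) : ℂ)

/-- `Λ_{3,n}`: triples `β ∈ ℕ³` with `1 ≤ β₁ + β₂ + β₃ ≤ n`. -/
def Lam3 (n : ℕ) : Finset (ℕ × ℕ × ℕ) :=
  ((range (n+1)) ×ˢ (range (n+1)) ×ˢ (range (n+1))).filter
    (fun β => 1 ≤ β.1 + β.2.1 + β.2.2 ∧ β.1 + β.2.1 + β.2.2 ≤ n)

/-- The linear map `A_n : ℕ³ → ℕ²` with matrix rows `(1,1,n)` and `(0,1,n+1)`. -/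
def Amap (n : ℕ) (β : ℕ × ℕ × ℕ) : ℕ × ℕ :=
  (β.1 + β.2.1 + n * β.2.2, β.2.1 + (n+1) * β.2.2)

/-- `c_β = Σ_{γ ≤ β} (−1)^{|β−γ|} C(β,γ) (A_nγ)‾`. -/
noncomputable def cvec (n : ℕ) (β : ℕ × ℕ × ℕ) : (Lam2 n) → ℂ :=
  ∑ γ ∈ (range (β.1+1)) ×ˢ (range (β.2.1+1)) ×ˢ (range (β.2.2+1)),
    (((-1 : ℂ) ^ ((β.1 + β.2.1 + β.2.2) - (γ.1 + γ.2.1 + γ.2.2))) *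
      ((β.1.choose γ.1 * β.2.1.choose γ.2.1 * β.2.2.choose γ.2.2 : ℕ) : ℂ)) •
      vbar n (Amap n γ)

/-- `J ∈ S_{A_n}`: `J ⊆ Λ_{3,n}`, `|J| = λ_{2,n}`, `det L^c_J ≠ 0`. -/
def memSA (n : ℕ) (J : Finset (ℕ × ℕ × ℕ)) : Prop :=
  J ⊆ Lam3 n ∧ J.card = (Lam2 n).card ∧
    ∀ e : (Lam2 n) ≃ J,
      (Matrix.of fun i j : (Lam2 n) => cvec n (e i).1 j).det ≠ 0

/-- `m_J = Σ_{β ∈ J} A_nβ`. -/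
def mJ (n : ℕ) (J : Finset (ℕ × ℕ × ℕ)) : ℕ × ℕ := ∑ β ∈ J, Amap n β

/-- `f_k(v) = k·v₁ + (1−k)·v₂`. -/
def fk (k : ℕ) (v : ℕ × ℕ) : ℤ := (k : ℤ) * v.1 + (1 - (k : ℤ)) * v.2

/-- Data of a sequence `η = (z, d₀, d₁, …, d_r)`. -/
structure OmegaData where
  r : ℕ
  z : Bool
  d : ℕ → ℕ

/-- `η ∈ Ω`: `d₀ = 0`, `d_i ≥ 1` for `1 ≤ i ≤ r` (and `d_i = 0` beyond `r`),
and `d₀ + ⋯ + d_r = n`. -/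
def OmegaData.IsOmega (n : ℕ) (η : OmegaData) : Prop :=
  η.d 0 = 0 ∧ (∀ i, 1 ≤ i → i ≤ η.r → 1 ≤ η.d i) ∧
  (∀ i, η.r < i → η.d i = 0) ∧
  (∑ i ∈ range (η.r + 1), η.d i) = n

/-- The unique `t` with `Σ_{i=0}^{t−1} d_i < j ≤ Σ_{i=0}^{t} d_i`. -/
noncomputable def tIdx (η : OmegaData) (j : ℕ) : ℕ :=
  sInf {t | j ≤ ∑ i ∈ range (t+1), η.d i}

/-- The vector `v_{j,η} ∈ ℕ²`. -/
noncomputable def vvec (η : OmegaData) (j : ℕ) : ℕ × ℕ :=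
  let t := tIdx η j
  let c := j - ∑ i ∈ range t, η.d i
  let a := (∑ i ∈ range t, if (Odd i ↔ Odd t) then η.d i else 0) + c
  if (η.z = true) ↔ Odd t then (a, 0) else (0, a)

/-- `T_{j,η}` for `1 ≤ j ≤ n`, and `T_{0,η} = {(1,1),…,(n,n)}`. -/
noncomputable def Tj (n : ℕ) (η : OmegaData) (j : ℕ) : Finset (ℕ × ℕ) :=
  if j = 0 then (range n).image (fun q => (q+1, q+1))
  else (range (n - j + 1)).image (fun p => vvec η j + (p, p))

/-- `T_η = ⋃_{j=0}^{n} T_{j,η}`. -/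
noncomputable def Tset (n : ℕ) (η : OmegaData) : Finset (ℕ × ℕ) :=
  (range (n+1)).biUnion (fun j => Tj n η j)

/-- `r_{i,η} = n·π₂(v_{i,η})`. -/
noncomputable def rshift (n : ℕ) (η : OmegaData) (i : ℕ) : ℕ := n * (vvec η i).2

/-- `T'_η = T_{0,η} ∪ ⋃_{i=1}^{n} (T_{i,η} + r_{i,η})`. -/
noncomputable def Tset' (n : ℕ) (η : OmegaData) : Finset (ℕ × ℕ) :=
  Tj n η 0 ∪ (Finset.Icc 1 n).biUnion
    (fun i => (Tj n η i).image (fun v => v + (rshift n η i, rshift n η i)))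

/-- `J_η`: the (unique) subset of `Λ_{3,n}` with `A_n(J_η) = T'_η`. -/
noncomputable def Jset (n : ℕ) (η : OmegaData) : Finset (ℕ × ℕ × ℕ) :=
  (Lam3 n).filter (fun β => Amap n β ∈ Tset' n η)

/-- `z_k = 1` iff `f_k((1,0)) ≤ f_k((n,n+1))`. -/
def zk (n k : ℕ) : Bool := decide (fk k (1, 0) ≤ fk k (n, n+1))

/-- `t_l` in the recursive definition of `η_k`, where `O`, `E` are the odd- and
even-indexed partial sums `Σ_{j<l, j odd} d_{k,j}` and `Σ_{j<l, j even} d_{k,j}`. -/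
noncomputable def tval (n k : ℕ) (l O E : ℕ) : ℕ :=
  let w := (if Odd l then E else O) + 1
  if ((zk n k = true) ↔ Odd l) then
    sSup {m : ℕ | (m : ℤ) * fk k (1, 0) ≤ fk k (w * n, w * (n+1))}
  else
    sSup {m : ℕ | (m : ℤ) * fk k (n, n+1) ≤ fk k (w, 0)}

/-- The pair `(Σ_{j≤l, j odd} d_{k,j}, Σ_{j≤l, j even} d_{k,j})` of the recursion
defining `η_k`. -/
noncomputable def oeSums (n k : ℕ) : ℕ → ℕ × ℕ
  | 0 => (0, 0)
  | l + 1 =>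
    let p := oeSums n k l
    let O := p.1
    let E := p.2
    let S := O + E
    let dnext := if S < n then
        min (n - S) (tval n k (l+1) O E - (if Odd (l+1) then O else E))
      else 0
    if Odd (l+1) then (O + dnext, E) else (O, E + dnext)

/-- `d_{k,l}`. -/
noncomputable def dk (n k : ℕ) : ℕ → ℕ
  | 0 => 0
  | l + 1 =>
    let p := oeSums n k l
    let O := p.1
    let E := p.2
    let S := O + E
    if S < n then
      min (n - S) (tval n k (l+1) O E - (if Odd (l+1) then O else E))
    else 0

/-- `η_k = (z_k, d_{k,0}, …, d_{k,r})`, where `r` is the first index with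
`Σ_{j=0}^{r} d_{k,j} = n`. -/
noncomputable def etak (n k : ℕ) : OmegaData :=
  { r := sInf {r | ∑ j ∈ range (r+1), dk n k j = n},
    z := zk n k,
    d := dk n k }

/-!
Put `a = f_k(1,0) = k` and `b = f_k(n,n+1) = n+1-k`. In block `t` of `η_k` the vector
`v_{i} + r_{i}·(1,1)` is `(s_t + c)·(1,0)` or `(s_t + c)·(n,n+1)`, so the values of the
blocks continue two arithmetic progressions `a, 2a, …` and `b, 2b, …`, the blocks alternating
between them. By the choice of `t_l`, a block stops at the last multiple not exceeding the next
value of the other progression, so `η_k` lists the merge of the two progressions in increasing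
order. What has to be checked is that no block is empty before the total reaches `n`, i.e.
`(s_l + 1)·c_l ≤ (s_{l+1} + 1)·c_{l+1}` where `c_l ∈ {a, b}` is the step of block `l`: `z_k`
gives it for `l = 1` and the maximality of `t_l` carries it from `l` to `l + 1`.
-/

lemma le_sSup_setOf_mul_le_iff {a c : ℤ} (ha : 0 < a) (hc : 0 ≤ c) (m : ℕ) :
    m ≤ sSup {m : ℕ | (m : ℤ) * a ≤ c} ↔ (m : ℤ) * a ≤ c := by
  have hbdd : BddAbove {m : ℕ | (m : ℤ) * a ≤ c} :=
    ⟨c.toNat, fun m (hm : (m : ℤ) * a ≤ c) => by rw [Int.le_toNat hc]; nlinarith⟩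
  refine ⟨fun hm => ?_, fun hm => le_csSup hbdd hm⟩
  have hmem : ((sSup {m : ℕ | (m : ℤ) * a ≤ c} : ℕ) : ℤ) * a ≤ c :=
    Nat.sSup_mem ⟨0, by simpa using hc⟩ hbdd
  calc (m : ℤ) * a ≤ ((sSup {m : ℕ | (m : ℤ) * a ≤ c} : ℕ) : ℤ) * a := by gcongr
    _ ≤ c := hmem

lemma tIdx_le_iff {η : OmegaData} {j : ℕ} (hj : ∃ t, j ≤ ∑ i ∈ range (t + 1), η.d i) (t : ℕ) :
    tIdx η j ≤ t ↔ j ≤ ∑ i ∈ range (t + 1), η.d i := by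
  refine ⟨fun ht => ?_, fun ht => Nat.sInf_le ht⟩
  have hmem : j ≤ ∑ i ∈ range (tIdx η j + 1), η.d i :=
    Nat.sInf_mem (s := {t | j ≤ ∑ i ∈ range (t + 1), η.d i}) hj
  exact hmem.trans (sum_le_sum_of_subset (range_mono (by omega)))

section EtaK

variable {n k : ℕ}

lemma zk_eq_true_iff : zk n k = true ↔ (k : ℤ) ≤ n + 1 - k := by
  rw [zk, decide_eq_true_iff]
  simp only [fk]
  push_cast
  constructor <;> intro h <;> linarith

def blockRate (n k t : ℕ) : ℤ :=
  if (zk n k = true ↔ Odd t) then k else n + 1 - k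

lemma one_le_blockRate (hk1 : 1 ≤ k) (hkn : k ≤ n) (t : ℕ) : 1 ≤ blockRate n k t := by
  unfold blockRate; split_ifs <;> omega

lemma blockRate_add_two (t : ℕ) : blockRate n k (t + 2) = blockRate n k t := by
  simp only [blockRate, Nat.odd_add_one, not_not]

lemma blockRate_one_le_blockRate_two : blockRate n k 1 ≤ blockRate n k 2 := by
  simp only [blockRate, zk_eq_true_iff, odd_one, iff_true, (by decide : ¬ Odd 2), iff_false]
  split_ifs <;> omega

lemma le_tval_iff (hk1 : 1 ≤ k) (hkn : k ≤ n) {t O E m : ℕ} :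
    m ≤ tval n k t O E ↔ (m : ℤ) * blockRate n k t ≤
      (((if Odd t then E else O : ℕ) : ℤ) + 1) * blockRate n k (t + 1) := by
  have hc : (0 : ℤ) ≤ (((if Odd t then E else O : ℕ) : ℤ) + 1) * blockRate n k (t + 1) :=
    mul_nonneg (by positivity) (by linarith [one_le_blockRate hk1 hkn (t + 1)])
  rw [← le_sSup_setOf_mul_le_iff (by linarith [one_le_blockRate hk1 hkn t]) hc]
  suffices h : tval n k t O E = sSup {m : ℕ | (m : ℤ) * blockRate n k t ≤
      (((if Odd t then E else O : ℕ) : ℤ) + 1) * blockRate n k (t + 1)} by rw [h]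
  unfold tval blockRate
  by_cases hz : zk n k = true <;> by_cases ht : Odd t <;>
    simp only [hz, ht, Nat.odd_add_one, fk, ↓reduceIte, iff_true, iff_false, not_true_eq_false,
      not_false_eq_true, Bool.false_eq_true, Nat.cast_add, Nat.cast_mul, Nat.cast_one,
      Nat.cast_zero, mul_one, mul_zero, add_zero] <;>
    · congr 1; ext; simp only [Set.mem_ofPred_eq]; ring_nf

/-- The paper's `s_t`. Before block `l + 1`, its own progression has reached `s (l + 1)` and the
other one `s (l + 2)`. -/
noncomputable def sameParitySum (n k t : ℕ) : ℕ :=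
  ∑ i ∈ range t, if (Odd i ↔ Odd t) then dk n k i else 0

local notation "s" => sameParitySum n k

lemma sameParitySum_zero : s 0 = 0 := rfl

lemma sameParitySum_one : s 1 = 0 := by simp [sameParitySum]

lemma sameParitySum_add_two (t : ℕ) : s (t + 2) = s t + dk n k t := by
  simp [sameParitySum, sum_range_succ, Nat.odd_add_one, -Nat.not_odd_iff_even]

lemma sameParitySum_two : s 2 = 0 := by
  rw [sameParitySum_add_two 0, sameParitySum_zero]; rfl

lemma sum_range_dk (t : ℕ) : ∑ i ∈ range t, dk n k i = s t + s (t + 1) := by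
  induction t with
  | zero => simp [sameParitySum_zero, sameParitySum_one]
  | succ t ih => rw [sum_range_succ, ih, sameParitySum_add_two]; ring

lemma oeSums_eq (l : ℕ) :
    oeSums n k l = if Odd (l + 1) then (s (l + 1), s (l + 2)) else (s (l + 2), s (l + 1)) := by
  induction l with
  | zero => simp [oeSums, sameParitySum_one, sameParitySum_two]
  | succ l ih =>
    have hstep : oeSums n k (l + 1) = if Odd (l + 1)
        then ((oeSums n k l).1 + dk n k (l + 1), (oeSums n k l).2)
        else ((oeSums n k l).1, (oeSums n k l).2 + dk n k (l + 1)) := rfl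
    by_cases h : Odd (l + 1) <;> simp [hstep, ih, h, Nat.odd_add_one, sameParitySum_add_two]

/-- The paper's `t_{l+1}`. -/
noncomputable def blockEnd (n k l : ℕ) : ℕ :=
  tval n k (l + 1) (oeSums n k l).1 (oeSums n k l).2

lemma le_blockEnd_iff (hk1 : 1 ≤ k) (hkn : k ≤ n) {l m : ℕ} :
    m ≤ blockEnd n k l ↔
      (m : ℤ) * blockRate n k (l + 1) ≤ ((s (l + 2) : ℤ) + 1) * blockRate n k (l + 2) := by
  rw [blockEnd, le_tval_iff hk1 hkn, oeSums_eq]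
  by_cases h : Odd (l + 1) <;> simp [h]

lemma dk_succ (l : ℕ) : dk n k (l + 1) =
    if s (l + 1) + s (l + 2) < n then
      min (n - (s (l + 1) + s (l + 2))) (blockEnd n k l - s (l + 1))
    else 0 := by
  have hsum : (oeSums n k l).1 + (oeSums n k l).2 = s (l + 1) + s (l + 2) := by
    rw [oeSums_eq]; split_ifs <;> simp only [add_comm]
  have hsame : (if Odd (l + 1) then (oeSums n k l).1 else (oeSums n k l).2) = s (l + 1) := by
    rw [oeSums_eq]; split_ifs <;> rfl
  rw [← hsum, ← hsame]
  rfl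

lemma sameParitySum_lt_blockEnd (hk1 : 1 ≤ k) (hkn : k ≤ n) (l : ℕ) :
    s (l + 1) + s (l + 2) < n → s (l + 1) < blockEnd n k l := by
  induction l with
  | zero =>
    intro _
    rw [Nat.lt_iff_add_one_le, le_blockEnd_iff hk1 hkn, sameParitySum_one, sameParitySum_two]
    simpa using blockRate_one_le_blockRate_two
  | succ l ih =>
    -- Block `l + 1` is not cut short by `n`, so it ends at `blockEnd n k l`, and the maximality
    -- of `blockEnd n k l` is the invariant for block `l + 2`.
    intro hl
    simp only [add_assoc, Nat.reduceAdd] at hl ⊢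
    have hs : s (l + 3) = s (l + 1) + dk n k (l + 1) := sameParitySum_add_two (l + 1)
    have hprev : s (l + 1) + s (l + 2) < n := by omega
    have hd := dk_succ (n := n) (k := k) l
    rw [if_pos hprev] at hd
    have hlt := ih hprev
    have hend : s (l + 3) = blockEnd n k l := by omega
    have hover := (le_blockEnd_iff hk1 hkn (l := l) (m := blockEnd n k l + 1)).not.mp (by omega)
    have hrate : blockRate n k (l + 3) = blockRate n k (l + 1) := blockRate_add_two (l + 1)
    rw [Nat.lt_iff_add_one_le, le_blockEnd_iff hk1 hkn, hend, hrate]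
    push_cast at hover ⊢
    linarith

lemma one_le_dk_succ (hk1 : 1 ≤ k) (hkn : k ≤ n) {l : ℕ} (hl : s (l + 1) + s (l + 2) < n) :
    1 ≤ dk n k (l + 1) := by
  have hlt := sameParitySum_lt_blockEnd hk1 hkn l hl
  rw [dk_succ, if_pos hl]
  omega

lemma sameParitySum_add_three_le_blockEnd (hk1 : 1 ≤ k) (hkn : k ≤ n) {l : ℕ}
    (hl : s (l + 1) + s (l + 2) < n) : s (l + 3) ≤ blockEnd n k l := by
  have hlt := sameParitySum_lt_blockEnd hk1 hkn l hl
  have hd := dk_succ (n := n) (k := k) l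
  rw [if_pos hl] at hd
  have hs : s (l + 3) = s (l + 1) + dk n k (l + 1) := sameParitySum_add_two (l + 1)
  omega

lemma min_le_sameParitySum_add (hk1 : 1 ≤ k) (hkn : k ≤ n) (l : ℕ) :
    min l n ≤ s (l + 1) + s (l + 2) := by
  induction l with
  | zero => omega
  | succ l ih =>
    have hs : s (l + 3) = s (l + 1) + dk n k (l + 1) := sameParitySum_add_two (l + 1)
    have hd : s (l + 1) + s (l + 2) < n → 1 ≤ dk n k (l + 1) := one_le_dk_succ hk1 hkn
    show min (l + 1) n ≤ s (l + 2) + s (l + 3)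
    omega

lemma tIdx_etak_le_iff (hk1 : 1 ≤ k) (hkn : k ≤ n) {j : ℕ} (hjn : j ≤ n) (t : ℕ) :
    tIdx (etak n k) j ≤ t ↔ j ≤ s (t + 1) + s (t + 2) := by
  have hsum (t : ℕ) : ∑ i ∈ range (t + 1), (etak n k).d i = s (t + 1) + s (t + 2) :=
    sum_range_dk (t + 1)
  have hreach := min_le_sameParitySum_add hk1 hkn n
  rw [tIdx_le_iff ⟨n, by rw [hsum]; omega⟩, hsum]

lemma tIdx_etak_eq (hk1 : 1 ≤ k) (hkn : k ≤ n) {j l : ℕ} (hjn : j ≤ n)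
    (hlo : s (l + 1) + s (l + 2) < j) (hhi : j ≤ s (l + 2) + s (l + 3)) :
    tIdx (etak n k) j = l + 1 := by
  have hle := (tIdx_etak_le_iff hk1 hkn hjn (l + 1)).2 hhi
  have hnot := (tIdx_etak_le_iff hk1 hkn hjn l).not.2 (by omega)
  omega

noncomputable def shiftedValue (n k j : ℕ) : ℤ :=
  fk k (vvec (etak n k) j + (rshift n (etak n k) j, rshift n (etak n k) j))

lemma shiftedValue_eq {j t : ℕ} (h : tIdx (etak n k) j = t) :
    shiftedValue n k j = blockRate n k t * ((s t + (j - (s t + s (t + 1))) : ℕ) : ℤ) := by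
  set a := s t + (j - (s t + s (t + 1)))
  have hv : vvec (etak n k) j = if (zk n k = true ↔ Odd t) then (a, 0) else (0, a) := by
    have hd : (etak n k).d = dk n k := rfl
    simp only [vvec, h, hd, sum_range_dk]
    rfl
  rw [shiftedValue, rshift, hv, blockRate]
  split_ifs <;> simp only [fk, Prod.fst_add, Prod.snd_add] <;> push_cast <;> ring

lemma shiftedValue_le_succ (hk1 : 1 ≤ k) (hkn : k ≤ n) {j : ℕ} (hj1 : 1 ≤ j)
    (hjn : j + 1 ≤ n) : shiftedValue n k j ≤ shiftedValue n k (j + 1) := by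
  have hj : j ≤ n := by omega
  obtain ⟨l, hl⟩ : ∃ l, tIdx (etak n k) j = l + 1 := by
    refine Nat.exists_eq_succ_of_ne_zero fun h0 => ?_
    have := (tIdx_etak_le_iff hk1 hkn hj 0).1 h0.le
    rw [sameParitySum_one, sameParitySum_two] at this
    omega
  have hlo : s (l + 1) + s (l + 2) < j :=
    not_le.1 ((tIdx_etak_le_iff hk1 hkn hj l).not.1 (by omega))
  have hhi : j ≤ s (l + 2) + s (l + 3) := (tIdx_etak_le_iff hk1 hkn hj (l + 1)).1 hl.le
  have hrate := one_le_blockRate hk1 hkn (l + 1)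
  rw [shiftedValue_eq hl]
  rcases Nat.lt_or_ge j (s (l + 2) + s (l + 3)) with hin | hend
  · rw [shiftedValue_eq (tIdx_etak_eq hk1 hkn hjn (by omega) hin)]
    gcongr
    omega
  · have hs : s (l + 3) = s (l + 1) + dk n k (l + 1) := sameParitySum_add_two (l + 1)
    have hs' : s (l + 4) = s (l + 2) + dk n k (l + 2) := sameParitySum_add_two (l + 2)
    have hd : 1 ≤ dk n k (l + 2) :=
      one_le_dk_succ hk1 hkn (l := l + 1) (show s (l + 2) + s (l + 3) < n by omega)
    have hnext : tIdx (etak n k) (j + 1) = l + 2 :=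
      tIdx_etak_eq hk1 hkn hjn (l := l + 1) (show s (l + 2) + s (l + 3) < j + 1 by omega)
        (show j + 1 ≤ s (l + 3) + s (l + 4) by omega)
    have hT := sameParitySum_add_three_le_blockEnd hk1 hkn (l := l) (by omega)
    rw [shiftedValue_eq hnext]
    calc blockRate n k (l + 1) * ((s (l + 1) + (j - (s (l + 1) + s (l + 2))) : ℕ) : ℤ)
        = blockRate n k (l + 1) * (s (l + 3) : ℤ) := by congr 2; omega
      _ ≤ blockRate n k (l + 1) * (blockEnd n k l : ℤ) := by gcongr
      _ ≤ ((s (l + 2) : ℤ) + 1) * blockRate n k (l + 2) := by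
        rw [mul_comm]; exact (le_blockEnd_iff hk1 hkn).1 le_rfl
      _ = blockRate n k (l + 2) * ((s (l + 2) + (j + 1 - (s (l + 2) + s (l + 3))) : ℕ) : ℤ) := by
        rw [show s (l + 2) + (j + 1 - (s (l + 2) + s (l + 3))) = s (l + 2) + 1 by omega]
        push_cast; ring

end EtaK

theorem stmt17_general (n : ℕ) (k : ℕ) (hk1 : 1 ≤ k) (hkn : k ≤ n)
    (i i' : ℕ) (hi1 : 1 ≤ i) (hii' : i < i') (hi'n : i' ≤ n) :
    fk k (vvec (etak n k) i + (rshift n (etak n k) i, rshift n (etak n k) i)) ≤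
    fk k (vvec (etak n k) i' + (rshift n (etak n k) i', rshift n (etak n k) i')) :=
  monotoneOn_of_le_add_one (f := shiftedValue n k) Set.ordConnected_Icc
    (fun _ _ hj hj' => shiftedValue_le_succ hk1 hkn hj.1 hj'.2)
    (Set.mem_Icc.2 ⟨hi1, by omega⟩) (Set.mem_Icc.2 ⟨by omega, hi'n⟩) hii'.le

theorem stmt17 (n : ℕ) (hn : 1 ≤ n) (k : ℕ) (hk1 : 1 ≤ k) (hkn : k ≤ n)
    (i i' : ℕ) (hi1 : 1 ≤ i) (hii' : i < i') (hi'n : i' ≤ n) :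
    fk k (vvec (etak n k) i + (rshift n (etak n k) i, rshift n (etak n k) i)) ≤
    fk k (vvec (etak n k) i' + (rshift n (etak n k) i', rshift n (etak n k) i')) :=
  stmt17_general n k hk1 hkn i i' hi1 hii' hi'n
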